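/- The number of matrices A ∈ SL₃(ℤ) satisfying Q(A·v) = Q(v) for all v ∈ ℤ³ equals 8 when Q(x,y,z) = x²+y²+10z², and equals 4 when Q(x,y,z) = 2x²+2y²+3z²−2xz. -/

import Mathlib

/-! The `j`-th column of an automorph `A` is `A eⱼ`, so it represents `Q(eⱼ)`, and by
polarization the sum of columns `i` and `j` represents `Q(eᵢ + eⱼ)`. Bounding coordinates shows
that `1, 10` (resp. `2, 3`) are represented by only a handful of vectors; among the resulting
candidate matrices exactly `8` (resp. `4`) also satisfy the conditions on `eᵢ + eⱼ` and
`det A = 1`, and these are checked to be automorphs. -/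

/-- The ternary quadratic form `x² + y² + 10z²` over `ℤ`. -/
def QA (v : Fin 3 → ℤ) : ℤ := v 0 ^ 2 + v 1 ^ 2 + 10 * v 2 ^ 2

/-- The ternary quadratic form `2x² + 2y² + 3z² - 2xz` over `ℤ`. -/
def QB (v : Fin 3 → ℤ) : ℤ := 2 * v 0 ^ 2 + 2 * v 1 ^ 2 + 3 * v 2 ^ 2 - 2 * v 0 * v 2

open Matrix

def IsProperAutomorph {n R : Type*} [Fintype n] [DecidableEq n] [CommRing R]
    (Q : (n → R) → R) (A : Matrix n n R) : Prop :=
  A.det = 1 ∧ ∀ v, Q (A *ᵥ v) = Q v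

namespace IsProperAutomorph

variable {n R : Type*} [Fintype n] [DecidableEq n] [CommRing R] {Q : (n → R) → R}
  {A : Matrix n n R}

theorem map_col (hA : IsProperAutomorph Q A) (j : n) : Q (A.col j) = Q (Pi.single j 1) := by
  rw [← mulVec_single_one, hA.2]

theorem map_col_add (hA : IsProperAutomorph Q A) (j k : n) :
    Q (A.col j + A.col k) = Q (Pi.single j 1 + Pi.single k 1) := by
  rw [← mulVec_single_one, ← mulVec_single_one, ← mulVec_add, hA.2]

end IsProperAutomorph

theorem exists_eq_vec3 {α : Type*} (u : Fin 3 → α) : ∃ x y z, u = ![x, y, z] :=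
  ⟨u 0, u 1, u 2, by ext i; fin_cases i <;> rfl⟩

theorem exists_eq_transpose_of_vec3 {α : Type*} (A : Matrix (Fin 3) (Fin 3) α) :
    ∃ u v w, A = (of ![u, v, w])ᵀ :=
  ⟨A.col 0, A.col 1, A.col 2, by ext i j; fin_cases j <;> rfl⟩

theorem eq_of_QA_eq_one {u : Fin 3 → ℤ} (h : QA u = 1) :
    u = ![1, 0, 0] ∨ u = ![-1, 0, 0] ∨ u = ![0, 1, 0] ∨ u = ![0, -1, 0] := by
  obtain ⟨x, y, z, rfl⟩ := exists_eq_vec3 u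
  simp only [QA, cons_val] at h
  obtain ⟨hx, hx'⟩ := abs_lt_of_sq_lt_sq'
    (show x ^ 2 < 2 ^ 2 by nlinarith [sq_nonneg y, sq_nonneg z]) zero_le_two
  obtain ⟨hy, hy'⟩ := abs_lt_of_sq_lt_sq'
    (show y ^ 2 < 2 ^ 2 by nlinarith [sq_nonneg x, sq_nonneg z]) zero_le_two
  obtain ⟨hz, hz'⟩ := abs_lt_of_sq_lt_sq'
    (show z ^ 2 < 1 ^ 2 by nlinarith [sq_nonneg x, sq_nonneg y]) zero_le_one
  interval_cases x <;> interval_cases y <;> interval_cases z <;> simp_all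

theorem eq_of_QA_eq_ten {u : Fin 3 → ℤ} (h : QA u = 10) :
    u = ![0, 0, 1] ∨ u = ![0, 0, -1] ∨
    u = ![1, 3, 0] ∨ u = ![1, -3, 0] ∨ u = ![-1, 3, 0] ∨ u = ![-1, -3, 0] ∨
    u = ![3, 1, 0] ∨ u = ![3, -1, 0] ∨ u = ![-3, 1, 0] ∨ u = ![-3, -1, 0] := by
  obtain ⟨x, y, z, rfl⟩ := exists_eq_vec3 u
  simp only [QA, cons_val] at h
  obtain ⟨hx, hx'⟩ := abs_lt_of_sq_lt_sq'
    (show x ^ 2 < 4 ^ 2 by nlinarith [sq_nonneg y, sq_nonneg z]) (by norm_num)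
  obtain ⟨hy, hy'⟩ := abs_lt_of_sq_lt_sq'
    (show y ^ 2 < 4 ^ 2 by nlinarith [sq_nonneg x, sq_nonneg z]) (by norm_num)
  obtain ⟨hz, hz'⟩ := abs_lt_of_sq_lt_sq'
    (show z ^ 2 < 2 ^ 2 by nlinarith [sq_nonneg x, sq_nonneg y]) zero_le_two
  interval_cases x <;> interval_cases y <;> interval_cases z <;> simp_all

/-- The matrices `diag(R, det R)` with `R ∈ O₂(ℤ)`. -/
def automorphsQA : Finset (Matrix (Fin 3) (Fin 3) ℤ) :=
  { !![1, 0, 0; 0, 1, 0; 0, 0, 1], !![1, 0, 0; 0, -1, 0; 0, 0, -1],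
    !![-1, 0, 0; 0, 1, 0; 0, 0, -1], !![-1, 0, 0; 0, -1, 0; 0, 0, 1],
    !![0, 1, 0; 1, 0, 0; 0, 0, -1], !![0, -1, 0; -1, 0, 0; 0, 0, -1],
    !![0, 1, 0; -1, 0, 0; 0, 0, 1], !![0, -1, 0; 1, 0, 0; 0, 0, 1] }

theorem mem_automorphsQA_of_isProperAutomorph {A : Matrix (Fin 3) (Fin 3) ℤ}
    (hA : IsProperAutomorph QA A) : A ∈ automorphsQA := by
  obtain ⟨u, v, w, rfl⟩ := exists_eq_transpose_of_vec3 A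
  have hdet := hA.1
  rw [det_transpose, det_fin_three] at hdet
  have hu : QA u = 1 := (hA.map_col 0).trans (by decide)
  have hv : QA v = 1 := (hA.map_col 1).trans (by decide)
  have hw : QA w = 10 := (hA.map_col 2).trans (by decide)
  have huv : QA (u + v) = 2 := (hA.map_col_add 0 1).trans (by decide)
  have huw : QA (u + w) = 11 := (hA.map_col_add 0 2).trans (by decide)
  have hvw : QA (v + w) = 11 := (hA.map_col_add 1 2).trans (by decide)
  rcases eq_of_QA_eq_one hu with rfl | rfl | rfl | rfl <;>
  rcases eq_of_QA_eq_one hv with rfl | rfl | rfl | rfl <;>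
  rcases eq_of_QA_eq_ten hw with rfl | rfl | rfl | rfl | rfl | rfl | rfl | rfl | rfl | rfl <;>
  revert hdet huv huw hvw <;> decide

theorem isProperAutomorph_of_mem_automorphsQA {A : Matrix (Fin 3) (Fin 3) ℤ}
    (hA : A ∈ automorphsQA) : IsProperAutomorph QA A := by
  fin_cases hA <;> refine ⟨by simp [det_fin_three], fun v => ?_⟩ <;>
    simp [QA, mulVec, dotProduct, Fin.sum_univ_three] <;> ring

theorem card_properAutomorphs_QA : Nat.card {A // IsProperAutomorph QA A} = 8 :=
  (Nat.subtype_card automorphsQA fun _ => ⟨isProperAutomorph_of_mem_automorphsQA,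
    mem_automorphsQA_of_isProperAutomorph⟩).trans (by decide)

-- `3 QB = (3z - x)² + 5x² + 6y²` and `2 QB = (2x - z)² + 4y² + 5z²`.
theorem bounds_of_QB_le_three {x y z : ℤ} (h : QB ![x, y, z] ≤ 3) :
    (-2 < x ∧ x < 2) ∧ (-2 < y ∧ y < 2) ∧ (-2 < z ∧ z < 2) := by
  simp only [QB, cons_val] at h
  refine ⟨abs_lt_of_sq_lt_sq' ?_ zero_le_two, abs_lt_of_sq_lt_sq' ?_ zero_le_two,
    abs_lt_of_sq_lt_sq' ?_ zero_le_two⟩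
  · nlinarith [sq_nonneg y, sq_nonneg (3 * z - x)]
  · nlinarith [sq_nonneg x, sq_nonneg (3 * z - x)]
  · nlinarith [sq_nonneg y, sq_nonneg (2 * x - z)]

theorem eq_of_QB_eq_two {u : Fin 3 → ℤ} (h : QB u = 2) :
    u = ![1, 0, 0] ∨ u = ![-1, 0, 0] ∨ u = ![0, 1, 0] ∨ u = ![0, -1, 0] := by
  obtain ⟨x, y, z, rfl⟩ := exists_eq_vec3 u
  obtain ⟨⟨hx, hx'⟩, ⟨hy, hy'⟩, ⟨hz, hz'⟩⟩ := bounds_of_QB_le_three (h.trans_le (by norm_num))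
  simp only [QB, cons_val] at h
  interval_cases x <;> interval_cases y <;> interval_cases z <;> simp_all

theorem eq_of_QB_eq_three {u : Fin 3 → ℤ} (h : QB u = 3) :
    u = ![0, 0, 1] ∨ u = ![0, 0, -1] ∨ u = ![1, 0, 1] ∨ u = ![-1, 0, -1] := by
  obtain ⟨x, y, z, rfl⟩ := exists_eq_vec3 u
  obtain ⟨⟨hx, hx'⟩, ⟨hy, hy'⟩, ⟨hz, hz'⟩⟩ := bounds_of_QB_le_three (h.trans_le (by norm_num))
  simp only [QB, cons_val] at h
  interval_cases x <;> interval_cases y <;> interval_cases z <;> simp_all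

def automorphsQB : Finset (Matrix (Fin 3) (Fin 3) ℤ) :=
  { !![1, 0, 0; 0, 1, 0; 0, 0, 1], !![1, 0, -1; 0, -1, 0; 0, 0, -1],
    !![-1, 0, 0; 0, 1, 0; 0, 0, -1], !![-1, 0, 1; 0, -1, 0; 0, 0, 1] }

theorem mem_automorphsQB_of_isProperAutomorph {A : Matrix (Fin 3) (Fin 3) ℤ}
    (hA : IsProperAutomorph QB A) : A ∈ automorphsQB := by
  obtain ⟨u, v, w, rfl⟩ := exists_eq_transpose_of_vec3 A
  have hdet := hA.1
  rw [det_transpose, det_fin_three] at hdet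
  have hu : QB u = 2 := (hA.map_col 0).trans (by decide)
  have hv : QB v = 2 := (hA.map_col 1).trans (by decide)
  have hw : QB w = 3 := (hA.map_col 2).trans (by decide)
  have huv : QB (u + v) = 4 := (hA.map_col_add 0 1).trans (by decide)
  have huw : QB (u + w) = 3 := (hA.map_col_add 0 2).trans (by decide)
  have hvw : QB (v + w) = 5 := (hA.map_col_add 1 2).trans (by decide)
  rcases eq_of_QB_eq_two hu with rfl | rfl | rfl | rfl <;>
  rcases eq_of_QB_eq_two hv with rfl | rfl | rfl | rfl <;>
  rcases eq_of_QB_eq_three hw with rfl | rfl | rfl | rfl <;>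
  revert hdet huv huw hvw <;> decide

theorem isProperAutomorph_of_mem_automorphsQB {A : Matrix (Fin 3) (Fin 3) ℤ}
    (hA : A ∈ automorphsQB) : IsProperAutomorph QB A := by
  fin_cases hA <;> refine ⟨by simp [det_fin_three], fun v => ?_⟩ <;>
    simp [QB, mulVec, dotProduct, Fin.sum_univ_three] <;> ring

theorem card_properAutomorphs_QB : Nat.card {A // IsProperAutomorph QB A} = 4 :=
  (Nat.subtype_card automorphsQB fun _ => ⟨isProperAutomorph_of_mem_automorphsQB,
    mem_automorphsQB_of_isProperAutomorph⟩).trans (by decide)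

/-- The form `x²+y²+10z²` has exactly `8` proper automorphs in `SL₃(ℤ)`, while
`2x²+2y²+3z²-2xz` has exactly `4`. -/
theorem stmt_11 :
    Nat.card {A : Matrix (Fin 3) (Fin 3) ℤ //
        A.det = 1 ∧ ∀ v : Fin 3 → ℤ, QA (A.mulVec v) = QA v} = 8 ∧
    Nat.card {A : Matrix (Fin 3) (Fin 3) ℤ //
        A.det = 1 ∧ ∀ v : Fin 3 → ℤ, QB (A.mulVec v) = QB v} = 4 :=
  ⟨card_properAutomorphs_QA, card_properAutomorphs_QB⟩
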